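/- For each i = 1, 2, let F_i : 𝒞_i → 𝒟_i and G_i : 𝒟_i → 𝒞_i be exact (triangulated) functors between triangulated categories such that G_i is left adjoint to F_i, with counit σ_i : G_i ∘ F_i → id and unit τ_i : id → F_i ∘ G_i. Let P : 𝒞_1 → 𝒞_2 and Q : 𝒟_1 → 𝒟_2 be faithful exact functors, and suppose there are natural isomorphisms φ : Q ∘ F_1 ≅ F_2 ∘ P and ψ : P ∘ G_1 ≅ G_2 ∘ Q such that the induced isomorphism P ∘ G_1 ∘ F_1 ≅ G_2 ∘ F_2 ∘ P is compatible with the counits (P σ_1 equals σ_2 P after composing with this isomorphism) and the induced isomorphism Q ∘ F_1 ∘ G_1 ≅ F_2 ∘ G_2 ∘ Q is compatible with the units (the composite of Q τ_1 with this isomorphism equals τ_2 Q). Then: (1) if F_2 (respectively G_2) is fully faithful, so is F_1 (respectively G_1); (2) if F_2 (respectively G_2) is an equivalence, so is F_1 (respectively G_1). -/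

import Mathlib

/-!
A faithful triangulated functor reflects isomorphisms: it sends the cone of `f` to the cone of
the image of `f`, and a faithful functor only kills zero objects. The compatibilities `hσ`, `hτ`
exhibit `P σ₁` and `Q τ₁` as `σ₂ P` and `τ₂ Q` up to isomorphisms, so `σ₁` (resp. `τ₁`) is an
isomorphism as soon as `σ₂` (resp. `τ₂`) is. For an adjunction, the right (resp. left) adjoint is
fully faithful exactly when the counit (resp. unit) is an isomorphism, and it is an equivalence
when both are.
-/

open CategoryTheory Limits Pretriangulated

universe v₁ v₂ v₃ v₄ u₁ u₂ u₃ u₄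

namespace CategoryTheory

lemma Limits.IsZero.of_faithful_of_isZero {C : Type u₁} [Category.{v₁} C] [HasZeroMorphisms C]
    {D : Type u₂} [Category.{v₂} D] [HasZeroMorphisms D] (F : C ⥤ D) [F.PreservesZeroMorphisms]
    [F.Faithful] {X : C} (hX : IsZero (F.obj X)) : IsZero X := by
  rw [IsZero.iff_id_eq_zero] at hX ⊢
  exact F.map_injective (by rw [F.map_id, F.map_zero, hX])

instance Functor.reflectsIsomorphisms_of_faithful_of_isTriangulated
    {C : Type u₁} [Category.{v₁} C] [HasZeroObject C] [Preadditive C] [HasShift C ℤ]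
    [∀ n : ℤ, (shiftFunctor C n).Additive] [Pretriangulated C]
    {D : Type u₂} [Category.{v₂} D] [HasZeroObject D] [Preadditive D] [HasShift D ℤ]
    [∀ n : ℤ, (shiftFunctor D n).Additive] [Pretriangulated D]
    (F : C ⥤ D) [F.CommShift ℤ] [F.IsTriangulated] [F.Faithful] : F.ReflectsIsomorphisms where
  reflects {X Y} f _ := by
    obtain ⟨Z, g, h, hT⟩ := distinguished_cocone_triangle f
    have hFZ : IsZero (F.obj Z) :=
      Triangle.isZero₃_of_isIso₁ _ (F.map_distinguished _ hT) (inferInstanceAs (IsIso (F.map f)))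
    exact (Triangle.isZero₃_iff_isIso₁ _ hT).1 (hFZ.of_faithful_of_isZero F)

namespace Adjunction

variable {C₁ : Type u₁} [Category.{v₁} C₁] {C₂ : Type u₂} [Category.{v₂} C₂]
  {D₁ : Type u₃} [Category.{v₃} D₁] {D₂ : Type u₄} [Category.{v₄} D₂]
  {F₁ : C₁ ⥤ D₁} {G₁ : D₁ ⥤ C₁} {F₂ : C₂ ⥤ D₂} {G₂ : D₂ ⥤ C₂}
  (adj₁ : G₁ ⊣ F₁) (adj₂ : G₂ ⊣ F₂) {P : C₁ ⥤ C₂} {Q : D₁ ⥤ D₂}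
  (φ : F₁ ⋙ Q ≅ P ⋙ F₂) (ψ : G₁ ⋙ P ≅ Q ⋙ G₂)

lemma isIso_counit_of_comp_iso [P.ReflectsIsomorphisms] [IsIso adj₂.counit]
    (hσ : ∀ X : C₁, P.map (adj₁.counit.app X) =
      ψ.hom.app (F₁.obj X) ≫ G₂.map (φ.hom.app X) ≫ adj₂.counit.app (P.obj X)) :
    IsIso adj₁.counit := by
  have (X : C₁) : IsIso (adj₁.counit.app X) := by
    have : IsIso (P.map (adj₁.counit.app X)) := by rw [hσ X]; infer_instance
    exact isIso_of_reflects_iso _ P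
  exact NatIso.isIso_of_isIso_app _

lemma isIso_unit_of_comp_iso [Q.ReflectsIsomorphisms] [IsIso adj₂.unit]
    (hτ : ∀ Y : D₁, Q.map (adj₁.unit.app Y) ≫ φ.hom.app (G₁.obj Y) ≫
      F₂.map (ψ.hom.app Y) = adj₂.unit.app (Q.obj Y)) :
    IsIso adj₁.unit := by
  have (Y : D₁) : IsIso (adj₁.unit.app Y) := by
    have : IsIso (Q.map (adj₁.unit.app Y) ≫ φ.hom.app (G₁.obj Y) ≫ F₂.map (ψ.hom.app Y)) := by
      rw [hτ Y]; infer_instance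
    have : IsIso (Q.map (adj₁.unit.app Y)) := IsIso.of_isIso_comp_right _ (φ.hom.app _ ≫ F₂.map (ψ.hom.app Y))
    exact isIso_of_reflects_iso _ Q
  exact NatIso.isIso_of_isIso_app _

end Adjunction

end CategoryTheory

theorem fullyFaithful_and_equivalence_transfer
    {C₁ : Type u₁} [Category.{v₁} C₁] [HasZeroObject C₁] [Preadditive C₁] [HasShift C₁ ℤ]
    [∀ n : ℤ, (shiftFunctor C₁ n).Additive] [Pretriangulated C₁]
    {C₂ : Type u₂} [Category.{v₂} C₂] [HasZeroObject C₂] [Preadditive C₂] [HasShift C₂ ℤ]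
    [∀ n : ℤ, (shiftFunctor C₂ n).Additive] [Pretriangulated C₂]
    {D₁ : Type u₃} [Category.{v₃} D₁] [HasZeroObject D₁] [Preadditive D₁] [HasShift D₁ ℤ]
    [∀ n : ℤ, (shiftFunctor D₁ n).Additive] [Pretriangulated D₁]
    {D₂ : Type u₄} [Category.{v₄} D₂] [HasZeroObject D₂] [Preadditive D₂] [HasShift D₂ ℤ]
    [∀ n : ℤ, (shiftFunctor D₂ n).Additive] [Pretriangulated D₂]
    (F₁ : C₁ ⥤ D₁) (G₁ : D₁ ⥤ C₁) (F₂ : C₂ ⥤ D₂) (G₂ : D₂ ⥤ C₂)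
    [F₁.CommShift ℤ] [F₁.IsTriangulated] [G₁.CommShift ℤ] [G₁.IsTriangulated]
    [F₂.CommShift ℤ] [F₂.IsTriangulated] [G₂.CommShift ℤ] [G₂.IsTriangulated]
    (adj₁ : G₁ ⊣ F₁) (adj₂ : G₂ ⊣ F₂)
    (P : C₁ ⥤ C₂) (Q : D₁ ⥤ D₂)
    [P.CommShift ℤ] [P.IsTriangulated] [P.Faithful]
    [Q.CommShift ℤ] [Q.IsTriangulated] [Q.Faithful]
    (φ : F₁ ⋙ Q ≅ P ⋙ F₂) (ψ : G₁ ⋙ P ≅ Q ⋙ G₂)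
    -- compatibility with the counits σᵢ = adjᵢ.counit : Fᵢ ⋙ Gᵢ ⟶ 𝟭
    (hσ : ∀ X : C₁, P.map (adj₁.counit.app X) =
      ψ.hom.app (F₁.obj X) ≫ G₂.map (φ.hom.app X) ≫ adj₂.counit.app (P.obj X))
    -- compatibility with the units τᵢ = adjᵢ.unit : 𝟭 ⟶ Gᵢ ⋙ Fᵢ
    (hτ : ∀ Y : D₁, Q.map (adj₁.unit.app Y) ≫ φ.hom.app (G₁.obj Y) ≫
      F₂.map (ψ.hom.app Y) = adj₂.unit.app (Q.obj Y)) :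
    ((F₂.Full ∧ F₂.Faithful) → (F₁.Full ∧ F₁.Faithful)) ∧
    ((G₂.Full ∧ G₂.Faithful) → (G₁.Full ∧ G₁.Faithful)) ∧
    (F₂.IsEquivalence → F₁.IsEquivalence) ∧
    (G₂.IsEquivalence → G₁.IsEquivalence) := by
  have counit_iso (_ : IsIso adj₂.counit) : IsIso adj₁.counit :=
    adj₁.isIso_counit_of_comp_iso adj₂ φ ψ hσ
  have unit_iso (_ : IsIso adj₂.unit) : IsIso adj₁.unit := adj₁.isIso_unit_of_comp_iso adj₂ φ ψ hτ
  refine ⟨fun ⟨_, _⟩ ↦ ?_, fun ⟨_, _⟩ ↦ ?_, fun _ ↦ ?_, fun _ ↦ ?_⟩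
  · have := counit_iso inferInstance
    exact ⟨adj₁.fullyFaithfulROfIsIsoCounit.full, adj₁.fullyFaithfulROfIsIsoCounit.faithful⟩
  · have := unit_iso inferInstance
    exact ⟨adj₁.fullyFaithfulLOfIsIsoUnit.full, adj₁.fullyFaithfulLOfIsIsoUnit.faithful⟩
  · have := counit_iso inferInstance
    have := unit_iso inferInstance
    exact adj₁.toEquivalence.isEquivalence_inverse
  · have := counit_iso inferInstance
    have := unit_iso inferInstance
    exact adj₁.toEquivalence.isEquivalence_functor
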